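/- arXiv:2402.10823 — 6 statements merged into one kernel-verified Lean document; each statement's English description precedes it below -/
import Mathlib

section
/- Let Γ be a group, G a finite normal subgroup of Γ, and T a divisible abelian subgroup of Γ such that every element of Γ is a product of an element of G and an element of T (i.e. Γ = G·T). Set μ = G ∩ T. Then μ is contained in the center of Γ (in particular μ is a normal subgroup of Γ and of G), the quotient group Γ/μ is isomorphic to the direct product (G/μ) × (T/μ), and the inclusion T ⊆ Γ induces a group isomorphism T/μ ≅ Γ/G. -/
/-!
Conjugation by an element of `Γ` restricts to an automorphism of the finite normal subgroup `G`,
so every `|Aut G|`-th power centralizes `G`; as `T` is divisible, all of `T` centralizes `G`.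
Then `G × T → Γ, (g, t) ↦ g t` is a surjective homomorphism, and an element of `G ⊓ T` commutes
with `G` (being in `T`) and with `T` (being in `G`), so it is central. The preimage of `G ⊓ T`
under the multiplication map is `(G ⊓ T) × (G ⊓ T)`, which gives `Γ/μ ≅ G/μ × T/μ`, while
`T → Γ/G` is surjective with kernel `μ`.
-/

namespace Subgroup

variable {Γ : Type*} [Group Γ]

theorem normal_of_le_center {N : Subgroup Γ} (hN : N ≤ center Γ) : N.Normal where
  conj_mem n hn g := by
    rw [mem_center_iff.mp (hN hn) g, mul_inv_cancel_right]
    exact hn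

theorem commute_pow_card_mulAut (G : Subgroup Γ) [G.Normal] (u : Γ) {g : Γ} (hg : g ∈ G) :
    Commute (u ^ Nat.card (MulAut G)) g := by
  have hconj : MulAut.conjNormal (u ^ Nat.card (MulAut G)) = (1 : MulAut G) := by
    rw [map_pow, pow_card_eq_one']
  have hfix := congrArg Subtype.val (DFunLike.congr_fun hconj ⟨g, hg⟩)
  rw [MulAut.conjNormal_apply] at hfix
  exact mul_inv_eq_iff_eq_mul.mp hfix

theorem le_centralizer_of_divisible (G : Subgroup Γ) [G.Normal] [Finite G] {T : Subgroup Γ}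
    (hTdiv : ∀ t ∈ T, ∀ n : ℕ, 1 ≤ n → ∃ u ∈ T, u ^ n = t) : T ≤ centralizer G := by
  intro t ht
  obtain ⟨u, -, rfl⟩ := hTdiv t ht (Nat.card (MulAut G)) Nat.card_pos
  exact mem_centralizer_iff.mpr fun g hg => (commute_pow_card_mulAut G u hg).symm

section CommutingSubgroups

variable {H K : Subgroup Γ}

theorem inf_le_center_of_le_centralizer (hK : K ≤ centralizer H)
    (hHK : ∀ γ : Γ, ∃ h ∈ H, ∃ k ∈ K, γ = h * k) : H ⊓ K ≤ center Γ := by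
  intro z hz
  refine mem_center_iff.mpr fun γ => ?_
  obtain ⟨h, hh, k, hk, rfl⟩ := hHK γ
  have hzh : Commute z h := (hK hz.2 h hh).symm
  have hzk : Commute z k := hK hk z hz.1
  exact (hzh.mul_right hzk).symm

def prodMulHom (hK : K ≤ centralizer H) : H × K →* Γ :=
  H.subtype.noncommCoprod K.subtype fun h k => hK k.2 h h.2

@[simp]
theorem prodMulHom_apply (hK : K ≤ centralizer H) (p : H × K) :
    prodMulHom hK p = (p.1 : Γ) * p.2 :=
  rfl

theorem surjective_prodMulHom (hK : K ≤ centralizer H)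
    (hHK : ∀ γ : Γ, ∃ h ∈ H, ∃ k ∈ K, γ = h * k) : Function.Surjective (prodMulHom hK) := by
  intro γ
  obtain ⟨h, hh, k, hk, rfl⟩ := hHK γ
  exact ⟨(⟨h, hh⟩, ⟨k, hk⟩), rfl⟩

theorem comap_prodMulHom_inf (hK : K ≤ centralizer H) :
    (H ⊓ K).comap (prodMulHom hK) = ((H ⊓ K).subgroupOf H).prod ((H ⊓ K).subgroupOf K) := by
  ext ⟨h, k⟩
  have hH : (h : Γ) * k ∈ H ↔ (k : Γ) ∈ H := mul_mem_cancel_left h.2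
  have hK' : (h : Γ) * k ∈ K ↔ (h : Γ) ∈ K := mul_mem_cancel_right k.2
  simp only [mem_comap, mem_inf, mem_prod, mem_subgroupOf, prodMulHom_apply, hH, hK']
  exact ⟨fun ⟨hk, hh⟩ => ⟨⟨h.2, hh⟩, hk, k.2⟩, fun ⟨⟨_, hh⟩, hk, _⟩ => ⟨hk, hh⟩⟩

noncomputable def quotientInfEquivProdQuotient [(H ⊓ K).Normal]
    [((H ⊓ K).subgroupOf H).Normal] [((H ⊓ K).subgroupOf K).Normal]
    (hK : K ≤ centralizer H) (hHK : ∀ γ : Γ, ∃ h ∈ H, ∃ k ∈ K, γ = h * k) :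
    Γ ⧸ (H ⊓ K) ≃* (H ⧸ (H ⊓ K).subgroupOf H) × (K ⧸ (H ⊓ K).subgroupOf K) :=
  let f₁ := (QuotientGroup.mk' (H ⊓ K)).comp (prodMulHom hK)
  let f₂ := (QuotientGroup.mk' ((H ⊓ K).subgroupOf H)).prodMap
    (QuotientGroup.mk' ((H ⊓ K).subgroupOf K))
  have hker : f₁.ker = f₂.ker := by
    rw [← MonoidHom.comap_ker, QuotientGroup.ker_mk', comap_prodMulHom_inf,
      MonoidHom.ker_prodMap, QuotientGroup.ker_mk', QuotientGroup.ker_mk']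
  (QuotientGroup.quotientKerEquivOfSurjective f₁
      ((QuotientGroup.mk'_surjective _).comp (surjective_prodMulHom hK hHK))).symm.trans <|
    (QuotientGroup.quotientMulEquivOfEq hker).trans <|
      QuotientGroup.quotientKerEquivOfSurjective f₂
        ((QuotientGroup.mk'_surjective _).prodMap (QuotientGroup.mk'_surjective _))

end CommutingSubgroups

noncomputable def quotientInfEquivQuotient {H K : Subgroup Γ} [H.Normal]
    [((H ⊓ K).subgroupOf K).Normal] (hHK : ∀ γ : Γ, ∃ h ∈ H, ∃ k ∈ K, γ = h * k) :
    K ⧸ (H ⊓ K).subgroupOf K ≃* Γ ⧸ H :=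
  let ψ := (QuotientGroup.mk' H).comp K.subtype
  have hψ : Function.Surjective ψ := by
    intro q
    induction q using QuotientGroup.induction_on with
    | H γ =>
      obtain ⟨h, hh, k, hk, rfl⟩ := hHK γ
      refine ⟨⟨k, hk⟩, ?_⟩
      simp [ψ, (QuotientGroup.eq_one_iff h).mpr hh]
  have hker : (H ⊓ K).subgroupOf K = ψ.ker := by
    rw [inf_subgroupOf_right, ← MonoidHom.comap_ker, QuotientGroup.ker_mk', comap_subtype]
  (QuotientGroup.quotientMulEquivOfEq hker).trans (QuotientGroup.quotientKerEquivOfSurjective ψ hψ)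

end Subgroup

open Subgroup in
theorem stmt_0_general {Γ : Type*} [Group Γ] (G T : Subgroup Γ) [Finite G] [G.Normal]
    (hTdiv : ∀ t ∈ T, ∀ n : ℕ, 1 ≤ n → ∃ u ∈ T, u ^ n = t)
    (hGT : ∀ γ : Γ, ∃ g ∈ G, ∃ t ∈ T, γ = g * t) :
    G ⊓ T ≤ Subgroup.center Γ ∧
    (G ⊓ T).Normal ∧ ((G ⊓ T).subgroupOf G).Normal ∧
    (∀ [_h1 : (G ⊓ T).Normal] [_h2 : ((G ⊓ T).subgroupOf G).Normal]
       [_h3 : ((G ⊓ T).subgroupOf T).Normal],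
      Nonempty ((Γ ⧸ (G ⊓ T)) ≃*
        (G ⧸ (G ⊓ T).subgroupOf G) × (T ⧸ (G ⊓ T).subgroupOf T)) ∧
      ∃ e : (T ⧸ (G ⊓ T).subgroupOf T) ≃* (Γ ⧸ G),
        ∀ t : T, e (QuotientGroup.mk t) = QuotientGroup.mk (t : Γ)) := by
  have hT : T ≤ centralizer G := le_centralizer_of_divisible G hTdiv
  have hμ : G ⊓ T ≤ center Γ := inf_le_center_of_le_centralizer hT hGT
  have hμN : (G ⊓ T).Normal := normal_of_le_center hμ
  exact ⟨hμ, hμN, hμN.subgroupOf G,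
    ⟨⟨quotientInfEquivProdQuotient hT hGT⟩, quotientInfEquivQuotient hGT, fun _ => rfl⟩⟩

/-- **Lemma 4.1 (group-theoretic content).** Let `Γ` be a group, `G` a finite normal
subgroup, `T` a divisible abelian subgroup with `Γ = G·T`, and `μ = G ⊓ T`.  Then `μ` is
central in `Γ` (in particular normal in `Γ` and in `G`), `Γ/μ ≅ (G/μ) × (T/μ)`, and the
inclusion `T ⊆ Γ` induces an isomorphism `T/μ ≅ Γ/G`. -/
theorem stmt_0 {Γ : Type*} [Group Γ] (G T : Subgroup Γ) [Finite G] [G.Normal]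
    (hTab : ∀ a ∈ T, ∀ b ∈ T, a * b = b * a)
    (hTdiv : ∀ t ∈ T, ∀ n : ℕ, 1 ≤ n → ∃ u ∈ T, u ^ n = t)
    (hGT : ∀ γ : Γ, ∃ g ∈ G, ∃ t ∈ T, γ = g * t) :
    G ⊓ T ≤ Subgroup.center Γ ∧
    (G ⊓ T).Normal ∧ ((G ⊓ T).subgroupOf G).Normal ∧
    (∀ [_h1 : (G ⊓ T).Normal] [_h2 : ((G ⊓ T).subgroupOf G).Normal]
       [_h3 : ((G ⊓ T).subgroupOf T).Normal],
      Nonempty ((Γ ⧸ (G ⊓ T)) ≃*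
        (G ⧸ (G ⊓ T).subgroupOf G) × (T ⧸ (G ⊓ T).subgroupOf T)) ∧
      ∃ e : (T ⧸ (G ⊓ T).subgroupOf T) ≃* (Γ ⧸ G),
        ∀ t : T, e (QuotientGroup.mk t) = QuotientGroup.mk (t : Γ)) :=
  stmt_0_general G T hTdiv hGT
end

section
/- Let Γ be a group, G a finite normal subgroup of Γ, and T a divisible abelian subgroup of Γ such that every element of Γ is a product of an element of G and an element of T (i.e. Γ = G·T). Then T is contained in the center of Γ, and the inclusion G ⊆ Γ induces a group isomorphism G/(G ∩ T) ≅ Γ/T. -/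
/-- **Lemma 4.2 (group-theoretic content).** Let `Γ` be a group, `G` a finite normal
subgroup, and `T` a divisible abelian subgroup with `Γ = G·T`.  Then `T` is central in
`Γ`, and the inclusion `G ⊆ Γ` induces a group isomorphism `G/(G ∩ T) ≅ Γ/T`. -/
theorem stmt_1 {Γ : Type*} [Group Γ] (G T : Subgroup Γ) [Finite G] [G.Normal]
    (hTab : ∀ a ∈ T, ∀ b ∈ T, a * b = b * a)
    (hTdiv : ∀ t ∈ T, ∀ n : ℕ, 1 ≤ n → ∃ u ∈ T, u ^ n = t)
    (hGT : ∀ γ : Γ, ∃ g ∈ G, ∃ t ∈ T, γ = g * t) :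
    T ≤ Subgroup.center Γ ∧
    (∀ [_h1 : T.Normal] [_h2 : ((G ⊓ T).subgroupOf G).Normal],
      ∃ e : (G ⧸ (G ⊓ T).subgroupOf G) ≃* (Γ ⧸ T),
        ∀ g : G, e (QuotientGroup.mk g) = QuotientGroup.mk (g : Γ)) := by
  -- T centralizes G
  have hcomm : ∀ t ∈ T, ∀ g ∈ G, t * g = g * t := by
    intro t ht g hg
    have : Finite (MulAut ↥G) := by
      exact Finite.of_injective (fun f : MulAut ↥G => (f : ↥G → ↥G))
        fun f g h => by ext x; exact congrArg Subtype.val (congrFun h x)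
    set n := Nat.card (MulAut ↥G) with hn
    have hn1 : 1 ≤ n := Nat.one_le_iff_ne_zero.mpr (Nat.card_ne_zero.mpr ⟨⟨1⟩, this⟩)
    obtain ⟨u, hu, hun⟩ := hTdiv t ht n hn1
    have h1 : MulAut.conjNormal (H := G) t = 1 := by
      rw [← hun, map_pow, pow_card_eq_one']
    have := congrArg (Subtype.val) (MulEquiv.ext_iff.mp h1 ⟨g, hg⟩)
    simp only [MulAut.conjNormal_apply, MulAut.one_apply] at this
    calc t * g = (t * g * t⁻¹) * t := by group
    _ = g * t := by rw [this]
  have hcenter : T ≤ Subgroup.center Γ := by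
    intro t ht
    rw [Subgroup.mem_center_iff]
    intro γ
    obtain ⟨g, hg, s, hs, rfl⟩ := hGT γ
    rw [mul_assoc, hTab s hs t ht, ← mul_assoc, ← hcomm t ht g hg, mul_assoc]
  refine ⟨hcenter, ?_⟩
  intro h1 h2
  let f : ↥G →* Γ ⧸ T := (QuotientGroup.mk' T).comp G.subtype
  have hker : f.ker = (G ⊓ T).subgroupOf G := by
    ext x
    simp only [f, MonoidHom.mem_ker, MonoidHom.comp_apply, QuotientGroup.mk'_apply,
      Subgroup.mem_subgroupOf, Subgroup.mem_inf]
    rw [QuotientGroup.eq_one_iff]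
    exact ⟨fun h => ⟨x.2, h⟩, fun h => h.2⟩
  have hsurj : Function.Surjective f := by
    intro q
    obtain ⟨γ, rfl⟩ := QuotientGroup.mk_surjective q
    obtain ⟨g, hg, s, hs, rfl⟩ := hGT γ
    refine ⟨⟨g, hg⟩, ?_⟩
    have : (QuotientGroup.mk (g * s) : Γ ⧸ T) = QuotientGroup.mk g := by
      rw [QuotientGroup.eq]
      simpa using T.inv_mem hs
    simp [f, this]
  refine ⟨(QuotientGroup.quotientMulEquivOfEq hker.symm).trans
    (QuotientGroup.quotientKerEquivOfSurjective f hsurj), fun g => ?_⟩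
  rfl
end

section
/- Let Γ be a group, G a finite normal subgroup of Γ, and T a divisible subgroup of Γ. Then every element of T commutes with every element of G; that is, T is contained in the centralizer of G in Γ. -/
/-- **Key step of Lemmas 4.1 and 4.2.** If `G` is a finite normal subgroup of a group `Γ`
and `T` is a divisible subgroup of `Γ`, then every element of `T` commutes with every
element of `G`, i.e. `T` is contained in the centralizer of `G` in `Γ`. -/
theorem stmt_2 {Γ : Type*} [Group Γ] (G T : Subgroup Γ) [Finite G] [G.Normal]
    (hTdiv : ∀ t ∈ T, ∀ n : ℕ, 1 ≤ n → ∃ u ∈ T, u ^ n = t) :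
    ∀ t ∈ T, ∀ g ∈ G, t * g = g * t := by
  intro t ht g hg
  have hfin : Finite (MulAut G) := Finite.of_injective _ MulEquiv.toEquiv_injective
  set N := Nat.card (MulAut G) with hN
  have hNpos : 1 ≤ N := Nat.card_pos
  obtain ⟨u, hu, hut⟩ := hTdiv t ht N hNpos
  have hφ : MulAut.conjNormal (H := G) t = 1 := by
    rw [← hut, map_pow, pow_card_eq_one']
  have := congrArg (fun e : MulAut G => ((e ⟨g, hg⟩ : G) : Γ)) hφ
  simp only [MulAut.conjNormal_apply, MulAut.one_apply] at this
  have h2 : t * g * t⁻¹ = g := this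
  exact mul_inv_eq_iff_eq_mul.mp h2
end

section
/- Let d ≥ 1 and e be integers, let H(d,e) = {(s,t) ∈ ℂˣ × ℂˣ : s^d = t^e} with the subspace topology, and let h = gcd(d,e) (with gcd(d,0) = d). Then the connected component of the identity element (1,1) in H(d,e) is exactly the subgroup {(s,t) ∈ ℂˣ × ℂˣ : s^{d/h} = t^{e/h}}. -/
/-!
Put `h = gcd(d, e)`, `a = d / h`, `b = e / h`, so `a` and `b` are coprime. The set
`S = {s^a = t^b}` is the image of the connected group `ℂˣ` under `z ↦ (z^b, z^a)` (surjectivity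
onto `S` is a Bézout argument), hence connected and contained in the identity component.
Conversely `(s, t) ↦ s^a / t^b` maps `H(d,e)` into the finite, hence discrete, group of
`h`-th roots of unity, so it is constant on the identity component, where it equals `1`.
-/

section

variable {G : Type*} [CommGroup G]

theorem exists_zpow_eq_of_isCoprime {a b : ℤ} (hab : IsCoprime a b) {s t : G}
    (h : s ^ a = t ^ b) : ∃ z : G, z ^ b = s ∧ z ^ a = t := by
  obtain ⟨u, v, huv⟩ := hab
  refine ⟨s ^ v * t ^ u, ?_, ?_⟩
  · calc (s ^ v * t ^ u) ^ b = s ^ (v * b) * (t ^ b) ^ u := by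
          rw [mul_zpow, ← zpow_mul, ← zpow_mul, ← zpow_mul, mul_comm u b]
      _ = s ^ (u * a + v * b) := by rw [← h, ← zpow_mul, ← zpow_add, add_comm, mul_comm a u]
      _ = s := by rw [huv, zpow_one]
  · calc (s ^ v * t ^ u) ^ a = (s ^ a) ^ v * t ^ (u * a) := by
          rw [mul_zpow, ← zpow_mul, ← zpow_mul, ← zpow_mul, mul_comm v a]
      _ = t ^ (u * a + v * b) := by rw [h, ← zpow_mul, ← zpow_add, add_comm, mul_comm b v]
      _ = t := by rw [huv, zpow_one]

variable [TopologicalSpace G] [IsTopologicalGroup G]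

theorem isPreconnected_setOf_zpow_eq [PreconnectedSpace G] {a b d e : ℤ} (hab : IsCoprime a b)
    (hade : a * e = b * d) :
    IsPreconnected {x : {p : G × G // p.1 ^ d = p.2 ^ e} | x.1.1 ^ a = x.1.2 ^ b} := by
  let φ : G → {p : G × G // p.1 ^ d = p.2 ^ e} := fun z =>
    ⟨(z ^ b, z ^ a), by rw [← zpow_mul, ← zpow_mul, hade]⟩
  have hφ : Continuous φ := ((continuous_zpow b).prodMk (continuous_zpow a)).subtype_mk _
  have hrange : Set.range φ = {x | x.1.1 ^ a = x.1.2 ^ b} := by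
    ext x
    constructor
    · rintro ⟨z, rfl⟩
      change (z ^ b) ^ a = (z ^ a) ^ b
      rw [← zpow_mul, ← zpow_mul, mul_comm]
    · intro h
      obtain ⟨z, hzs, hzt⟩ := exists_zpow_eq_of_isCoprime hab h
      exact ⟨z, Subtype.ext (Prod.ext hzs hzt)⟩
  rw [← hrange]
  exact isPreconnected_range hφ

theorem connectedComponent_subset_setOf_zpow_eq [T1Space G] {a b d e : ℤ} {n : ℕ}
    (htors : {z : G | z ^ n = 1}.Finite) (hd : d = a * n) (he : e = b * n) :
    connectedComponent (⟨(1, 1), by simp⟩ : {p : G × G // p.1 ^ d = p.2 ^ e}) ⊆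
      {x | x.1.1 ^ a = x.1.2 ^ b} := by
  let ψ : {p : G × G // p.1 ^ d = p.2 ^ e} → G := fun x => x.1.1 ^ a / x.1.2 ^ b
  have hψ : Continuous ψ := by fun_prop
  have hψtors : ∀ x, ψ x ∈ {z : G | z ^ n = 1} := by
    rintro ⟨⟨s, t⟩, hst⟩
    change (s ^ a / t ^ b) ^ n = 1
    rw [← zpow_natCast, div_zpow, ← zpow_mul, ← zpow_mul, ← hd, ← he, hst, div_self']
  intro x hx
  have hψx : ψ x = ψ ⟨(1, 1), by simp⟩ :=
    isPreconnected_connectedComponent.constant_of_mapsTo htors.isDiscrete hψ.continuousOn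
      (fun x _ ↦ hψtors x) hx mem_connectedComponent
  simpa [ψ, div_eq_one] using hψx

theorem connectedComponent_one_setOf_zpow_eq [PreconnectedSpace G] [T1Space G]
    (htors : ∀ n : ℕ, n ≠ 0 → {z : G | z ^ n = 1}.Finite) {d e : ℤ} (hd : d ≠ 0) :
    connectedComponent (⟨(1, 1), by simp⟩ : {p : G × G // p.1 ^ d = p.2 ^ e}) =
      {x | x.1.1 ^ (d / (Int.gcd d e : ℤ)) = x.1.2 ^ (e / (Int.gcd d e : ℤ))} := by
  have hgcd : Int.gcd d e ≠ 0 := (Int.gcd_pos_of_ne_zero_left e hd).ne'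
  have hcop : IsCoprime (d / (Int.gcd d e : ℤ)) (e / (Int.gcd d e : ℤ)) :=
    Int.isCoprime_iff_gcd_eq_one.mpr (Int.gcd_div_gcd_div_gcd (Nat.pos_of_ne_zero hgcd))
  have hdd := (Int.ediv_mul_cancel (Int.gcd_dvd_left d e)).symm
  have hee := (Int.ediv_mul_cancel (Int.gcd_dvd_right d e)).symm
  refine (connectedComponent_subset_setOf_zpow_eq (htors _ hgcd) hdd hee).antisymm ?_
  refine (isPreconnected_setOf_zpow_eq hcop ?_).subset_connectedComponent (by simp)
  linear_combination (d / (Int.gcd d e : ℤ)) * hee - (e / (Int.gcd d e : ℤ)) * hdd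

end

theorem Complex.finite_setOf_units_pow_eq_one (n : ℕ) (hn : n ≠ 0) :
    {z : ℂˣ | z ^ n = 1}.Finite := by
  have : NeZero n := ⟨hn⟩
  have : Finite (rootsOfUnity n ℂ) := inferInstance
  convert Set.toFinite ((rootsOfUnity n ℂ : Subgroup ℂˣ) : Set ℂˣ)
  ext z
  exact (_root_.mem_rootsOfUnity n z).symm

/-- **Remark 2.3 (identity component of the stabilizer).** For integers `d ≥ 1` and `e`,
the connected component of the identity in
`H(d,e) = {(s,t) ∈ ℂˣ × ℂˣ : s^d = t^e}` (with the subspace topology) is exactly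
`{(s,t) : s^(d/h) = t^(e/h)}` where `h = gcd(d,e)`. -/
theorem stmt_7 (d e : ℤ) (hd : 1 ≤ d) :
    connectedComponent (⟨(1, 1), by simp⟩ : {p : ℂˣ × ℂˣ // p.1 ^ d = p.2 ^ e}) =
      {x : {p : ℂˣ × ℂˣ // p.1 ^ d = p.2 ^ e} |
        (x : ℂˣ × ℂˣ).1 ^ (d / (Int.gcd d e : ℤ)) =
          (x : ℂˣ × ℂˣ).2 ^ (e / (Int.gcd d e : ℤ))} :=
  connectedComponent_one_setOf_zpow_eq Complex.finite_setOf_units_pow_eq_one (by omega)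
end

section
/- Let n ≥ 1, let d₁, …, dₙ be positive integers and e₁, …, eₙ integers. Let H = {(s₁, …, sₙ, t) ∈ (ℂˣ)ⁿ × ℂˣ : sᵢ^{dᵢ} = t^{eᵢ} for all i} with the subspace topology, let H⁰ be the connected component of the identity in H, and set r = lcm over i of dᵢ / gcd(dᵢ, eᵢ) (with gcd(dᵢ,0) = dᵢ). Then the group homomorphism H⁰ → ℂˣ given by (s₁, …, sₙ, t) ↦ t is surjective and every one of its fibers has exactly r elements. -/
/-!
Put `c i = r * e i / d i`. Since `r` generates the ideal `{k | d i ∣ k * e i for all i}`, the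
integers `c 1, …, c n, r` are coprime, so the one-parameter subgroup `u ↦ (u ^ c, u ^ r)` of `H` has
a retraction `(s, t) ↦ (∏ i, s i ^ α i) * t ^ β` given by Bézout coefficients. The kernel of that
retraction on `H` consists of torsion of bounded exponent, hence is finite, so the image of the
one-parameter subgroup is clopen; being connected, it is `H⁰`. Its fiber over `t` is the set of
`r`-th roots of `t`.
-/

open Finset

theorem Int.dvd_mul_iff_ediv_gcd_dvd {d e k : ℤ} (hd : d ≠ 0) :
    d ∣ k * e ↔ d / gcd d e ∣ k := by
  have hg : 0 < gcd d e := Int.gcd_pos_of_ne_zero_left e hd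
  have hg' : (gcd d e : ℤ) ≠ 0 := by positivity
  obtain ⟨q, hq⟩ := Int.gcd_dvd_left d e
  obtain ⟨f, hf⟩ := Int.gcd_dvd_right d e
  have hdq : d / gcd d e = q := Int.ediv_eq_of_eq_mul_right hg' hq
  have hef : e / gcd d e = f := Int.ediv_eq_of_eq_mul_right hg' hf
  have hcop : IsCoprime q f := by
    rw [Int.isCoprime_iff_gcd_eq_one, ← hdq, ← hef, Int.gcd_ediv_gcd_ediv_gcd hg]
  rw [hdq]
  calc d ∣ k * e ↔ gcd d e * q ∣ gcd d e * (k * f) := by rw [← hq, mul_left_comm, ← hf]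
    _ ↔ q ∣ k * f := mul_dvd_mul_iff_left hg'
    _ ↔ q ∣ k := ⟨hcop.dvd_of_dvd_mul_right, fun h => h.mul_right f⟩

theorem Int.dvd_mul_iff_toNat_div_gcd_dvd {d e k : ℤ} (hd : 0 < d) :
    d ∣ k * e ↔ ((d.toNat / gcd d e : ℕ) : ℤ) ∣ k := by
  rw [Int.dvd_mul_iff_ediv_gcd_dvd hd.ne', Int.natCast_ediv, Int.toNat_of_nonneg hd.le]

section LcmDivGcd

variable {ι : Type*} [Fintype ι] {d e : ι → ℤ}

def lcmDivGcd (d e : ι → ℤ) : ℕ :=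
  univ.lcm fun i => (d i).toNat / Int.gcd (d i) (e i)

theorem natCast_lcmDivGcd_dvd_iff (hd : ∀ i, 0 < d i) (k : ℤ) :
    (lcmDivGcd d e : ℤ) ∣ k ↔ ∀ i, d i ∣ k * e i := by
  simp only [lcmDivGcd, Int.natCast_dvd, Finset.lcm_dvd_iff, mem_univ, true_implies,
    Int.dvd_mul_iff_toNat_div_gcd_dvd (hd _)]

theorem lcmDivGcd_ne_zero (hd : ∀ i, 0 < d i) : lcmDivGcd d e ≠ 0 := by
  rw [lcmDivGcd, Ne, Finset.lcm_eq_zero_iff]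
  rintro ⟨i, -, hi⟩
  have hi' := congrArg (Nat.cast : ℕ → ℤ) hi
  rw [Int.natCast_ediv, Int.toNat_of_nonneg (hd i).le] at hi'
  exact Int.ediv_gcd_ne_zero_of_ne_zero_left _ (hd i).ne' hi'

end LcmDivGcd

theorem exists_sum_mul_add_mul_eq_one {ι : Type*} [Fintype ι] {d e c : ι → ℤ} {r : ℤ}
    (hr : r ≠ 0) (hlcm : ∀ k, r ∣ k ↔ ∀ i, d i ∣ k * e i) (hc : ∀ i, c i * d i = r * e i) :
    ∃ (α : ι → ℤ) (β : ℤ), ∑ i, α i * c i + β * r = 1 := by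
  obtain ⟨g, hg⟩ := (IsPrincipalIdealRing.principal (Ideal.span (insert r (Set.range c)))).principal
  have hgdvd : ∀ x ∈ insert r (Set.range c), g ∣ x := fun x hx => by
    rw [← Ideal.mem_span_singleton, ← Ideal.submodule_span_eq, ← hg]
    exact Ideal.subset_span hx
  obtain ⟨s, hs⟩ := hgdvd r (Set.mem_insert r _)
  have hg0 : g ≠ 0 := by
    rintro rfl
    exact hr (by rw [hs, zero_mul])
  -- Cancelling `g` from `c i * d i = r * e i` gives `d i ∣ s * e i` for all `i`, so `r ∣ s = r / g`.
  have hrs : r ∣ s := (hlcm s).2 fun i => by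
    obtain ⟨c', hc'⟩ := hgdvd (c i) (Set.mem_insert_of_mem _ ⟨i, rfl⟩)
    refine ⟨c', mul_left_cancel₀ hg0 ?_⟩
    rw [← mul_assoc, ← hs, ← hc i, hc', mul_comm (d i), mul_assoc]
  have hunit : IsUnit g := by
    obtain ⟨t, ht⟩ := hrs
    refine isUnit_iff_exists_inv.2 ⟨t, mul_left_cancel₀ hr ?_⟩
    rw [mul_one, ← mul_assoc, mul_comm r g, mul_assoc, ← ht, ← hs]
  have hone : (1 : ℤ) ∈ Ideal.span (insert r (Set.range c)) := by
    rw [hg, Ideal.submodule_span_eq, Ideal.span_singleton_eq_top.2 hunit]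
    exact Submodule.mem_top
  obtain ⟨β, z, hz, hβ⟩ := Ideal.mem_span_insert.1 hone
  obtain ⟨α, rfl⟩ := Ideal.mem_span_range_iff_exists_fun.1 hz
  exact ⟨α, β, by rw [hβ, add_comm]⟩

theorem zpow_sum {G ι : Type*} [CommGroup G] (u : G) (s : Finset ι) (f : ι → ℤ) :
    u ^ (∑ i ∈ s, f i) = ∏ i ∈ s, u ^ f i := by
  classical
  induction s using Finset.induction_on with
  | empty => simp
  | insert j s hj ih => rw [sum_insert hj, prod_insert hj, zpow_add, ih]

theorem Continuous.isClopen_preimage_singleton_of_finite_range {X Y : Type*} [TopologicalSpace X]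
    [TopologicalSpace Y] [T1Space Y] {f : X → Y} (hf : Continuous f) (hfin : (Set.range f).Finite)
    (y : Y) : IsClopen (f ⁻¹' {y}) := by
  have : Finite (Set.range f) := hfin.to_subtype
  exact (isClopen_discrete {z : Set.range f | (z : Y) = y}).preimage hf.rangeFactorization

theorem connectedComponent_one_eq_range_of_leftInverse {G H : Type*} [Group G] [TopologicalSpace G]
    [PreconnectedSpace G] [Group H] [TopologicalSpace H] [IsTopologicalGroup H] [T1Space H]
    {φ : G →* H} {π : H →* G} (hφ : Continuous φ) (hπ : Continuous π)
    (hπφ : ∀ g, π (φ g) = g) (hker : (π.ker : Set H).Finite) :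
    connectedComponent (1 : H) = Set.range φ := by
  set ρ : H → H := fun x => φ (π x) * x⁻¹
  have hρ : Continuous ρ := (hφ.comp hπ).mul continuous_inv
  have hρ_ker : Set.range ρ ⊆ π.ker := by
    rintro _ ⟨x, rfl⟩
    simp [ρ, hπφ]
  have hfiber : ρ ⁻¹' {1} = Set.range φ := by
    ext x
    simp only [Set.mem_preimage, Set.mem_singleton_iff, mul_inv_eq_one, ρ, Set.mem_range]
    exact ⟨fun h => ⟨π x, h⟩, fun ⟨g, hg⟩ => hg ▸ by rw [hπφ]⟩
  have hclopen : IsClopen (Set.range φ) :=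
    hfiber ▸ hρ.isClopen_preimage_singleton_of_finite_range (hker.subset hρ_ker) 1
  have h1 : (1 : H) ∈ Set.range φ := ⟨1, map_one φ⟩
  exact (hclopen.connectedComponent_subset h1).antisymm
    ((isPreconnected_range hφ).subset_connectedComponent h1)

theorem Nat.card_mem_range_and {α β : Type*} {f : α → β} (hf : Function.Injective f)
    (p : β → Prop) : Nat.card {y // y ∈ Set.range f ∧ p y} = Nat.card {x // p (f x)} := by
  change Nat.card ↥(Set.range f ∩ {y | p y}) = Nat.card ↥{x | p (f x)}
  rw [← Set.image_preimage_eq_range_inter, Nat.card_image_of_injective hf]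
  rfl

theorem IsAlgClosed.exists_units_pow_eq {K : Type*} [Field K] [IsAlgClosed K] {r : ℕ}
    (hr : r ≠ 0) (t : Kˣ) : ∃ u : Kˣ, u ^ r = t := by
  obtain ⟨z, hz⟩ := IsAlgClosed.exists_pow_nat_eq (t : K) (Nat.pos_of_ne_zero hr)
  have hz0 : z ≠ 0 := by
    rintro rfl
    exact t.ne_zero (by rw [← hz, zero_pow hr])
  exact ⟨Units.mk0 z hz0, Units.ext (by simp [hz])⟩

theorem Complex.card_units_pow_eq {r : ℕ} (hr : r ≠ 0) (t : ℂˣ) :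
    Nat.card {u : ℂˣ // u ^ r = t} = r := by
  obtain ⟨u₀, rfl⟩ := IsAlgClosed.exists_units_pow_eq hr t
  have : NeZero r := ⟨hr⟩
  have e : {u : ℂˣ // u ^ r = u₀ ^ r} ≃ (powMonoidHom r : ℂˣ →* ℂˣ).ker :=
    (powMonoidHom r).fiberEquivKer u₀
  rw [Nat.card_congr e, ← rootsOfUnity_eq_ker, Complex.card_rootsOfUnity]

namespace Torus

section CommGroup

variable {ι M : Type*} [CommGroup M] {d e c : ι → ℤ} {r : ℤ}

variable (M) in
def zpowEqSubgroup (d e : ι → ℤ) : Subgroup ((ι → M) × M) where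
  carrier := {p | ∀ i, p.1 i ^ d i = p.2 ^ e i}
  one_mem' _ := by simp
  mul_mem' ha hb i := by simp [mul_zpow, ha i, hb i]
  inv_mem' ha i := by simp [ha i]

@[simps]
def cocharacter (c : ι → ℤ) (r : ℤ) : M →* (ι → M) × M where
  toFun u := (fun i => u ^ c i, u ^ r)
  map_one' := by ext <;> simp
  map_mul' u v := by ext <;> simp [mul_zpow]

@[simps]
def character [Fintype ι] (α : ι → ℤ) (β : ℤ) : (ι → M) × M →* M where
  toFun p := (∏ i, p.1 i ^ α i) * p.2 ^ β
  map_one' := by simp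
  map_mul' p q := by simp [mul_zpow, prod_mul_distrib, mul_mul_mul_comm]

theorem cocharacter_mem_zpowEqSubgroup (hc : ∀ i, c i * d i = r * e i) (u : M) :
    cocharacter c r u ∈ zpowEqSubgroup M d e := fun i => by
  simp [← zpow_mul, hc i]

def cocharacterInto (hc : ∀ i, c i * d i = r * e i) : M →* zpowEqSubgroup M d e :=
  (cocharacter c r).codRestrict _ (cocharacter_mem_zpowEqSubgroup hc)

theorem character_cocharacter [Fintype ι] (α : ι → ℤ) (β : ℤ) (u : M) :
    character α β (cocharacter c r u) = u ^ (∑ i, α i * c i + β * r) := by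
  simp [← zpow_mul, zpow_add, zpow_sum, mul_comm]

theorem character_cocharacter_eq_self [Fintype ι] {α : ι → ℤ} {β : ℤ}
    (hαβ : ∑ i, α i * c i + β * r = 1) (u : M) : character α β (cocharacter c r u) = u := by
  rw [character_cocharacter, hαβ, zpow_one]

theorem zpow_eq_cocharacter_of_mem {p : (ι → M) × M} (hp : p ∈ zpowEqSubgroup M d e)
    (hc : ∀ i, c i * d i = r * e i) {D : ℤ} (hD : ∀ i, d i ∣ D) :
    p ^ (r * D) = cocharacter c r (p.2 ^ D) := by
  refine Prod.ext (funext fun i => ?_) ?_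
  · obtain ⟨w, hw⟩ := hD i
    calc p.1 i ^ (r * D) = (p.1 i ^ d i) ^ (r * w) := by rw [← zpow_mul, hw]; ring_nf
      _ = (p.2 ^ D) ^ c i := by
        rw [hp i, ← zpow_mul, ← zpow_mul, hw]; congr 1; linear_combination -w * hc i
  · simp [← zpow_mul, mul_comm]

theorem zpow_eq_one_of_character_eq_one [Fintype ι] {α : ι → ℤ} {β : ℤ}
    (hαβ : ∑ i, α i * c i + β * r = 1) {p : (ι → M) × M} (hp : p ∈ zpowEqSubgroup M d e)
    (hc : ∀ i, c i * d i = r * e i) {D : ℤ} (hD : ∀ i, d i ∣ D) (h1 : character α β p = 1) :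
    p ^ (r * D) = 1 := by
  have key := zpow_eq_cocharacter_of_mem hp hc hD
  have h2 := congrArg (character α β) key
  rw [map_zpow, h1, one_zpow, character_cocharacter_eq_self hαβ] at h2
  rw [key, ← h2, map_one]

end CommGroup

theorem finite_setOf_zpow_eq_one {ι : Type*} [Finite ι] {K : Type*} [CommRing K] [IsDomain K]
    {N : ℤ} (hN : N ≠ 0) : {p : (ι → Kˣ) × Kˣ | p ^ N = 1}.Finite := by
  have : NeZero N.natAbs := ⟨Int.natAbs_ne_zero.2 hN⟩
  have hmem {x : Kˣ} (hx : x ^ N = 1) : x ∈ rootsOfUnity N.natAbs K := by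
    rwa [← ker_zpowGroupHom_eq_rootsOfUnity, MonoidHom.mem_ker]
  refine (Set.finite_range fun z : (ι → rootsOfUnity N.natAbs K) × rootsOfUnity N.natAbs K =>
    ((fun i => (z.1 i : Kˣ)), (z.2 : Kˣ))).subset fun p hp => ?_
  have hp' := Prod.ext_iff.1 hp
  exact ⟨(fun i => ⟨p.1 i, hmem (congrFun hp'.1 i)⟩, ⟨p.2, hmem hp'.2⟩), rfl⟩

section Complex

variable {ι : Type*} [Fintype ι] {d e c α : ι → ℤ} {β : ℤ} {r : ℕ}

theorem connectedComponent_one_eq_range_cocharacterInto (hd : ∀ i, d i ≠ 0) (hr : r ≠ 0)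
    (hc : ∀ i, c i * d i = r * e i) (hαβ : ∑ i, α i * c i + β * r = 1) :
    connectedComponent (1 : zpowEqSubgroup ℂˣ d e) = Set.range (cocharacterInto hc) := by
  have hD : ∀ i, d i ∣ ∏ j, d j := fun i => dvd_prod_of_mem d (mem_univ i)
  have hD0 : (r : ℤ) * ∏ j, d j ≠ 0 :=
    mul_ne_zero (Int.natCast_ne_zero.2 hr) (prod_ne_zero_iff.2 fun i _ => hd i)
  refine connectedComponent_one_eq_range_of_leftInverse
    (π := (character α β).comp (zpowEqSubgroup ℂˣ d e).subtype) ?_ ?_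
    (character_cocharacter_eq_self hαβ) ?_
  · exact Continuous.subtype_mk
      (show Continuous fun u : ℂˣ => ((fun i => u ^ c i, u ^ (r : ℤ)) : (ι → ℂˣ) × ℂˣ) by
        fun_prop) _
  · show Continuous fun x : zpowEqSubgroup ℂˣ d e => (∏ i, x.1.1 i ^ α i) * x.1.2 ^ β
    fun_prop
  · exact ((finite_setOf_zpow_eq_one hD0).preimage Subtype.val_injective.injOn).subset
      fun x hx => zpow_eq_one_of_character_eq_one hαβ x.2 hc hD hx

theorem exists_mem_connectedComponent_one_snd_eq (hd : ∀ i, d i ≠ 0) (hr : r ≠ 0)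
    (hc : ∀ i, c i * d i = r * e i) (hαβ : ∑ i, α i * c i + β * r = 1) (t : ℂˣ) :
    ∃ x ∈ connectedComponent (1 : zpowEqSubgroup ℂˣ d e), (x : (ι → ℂˣ) × ℂˣ).2 = t := by
  obtain ⟨u, rfl⟩ := IsAlgClosed.exists_units_pow_eq hr t
  rw [connectedComponent_one_eq_range_cocharacterInto hd hr hc hαβ]
  exact ⟨_, ⟨u, rfl⟩, zpow_natCast u r⟩

theorem card_connectedComponent_one_snd_eq (hd : ∀ i, d i ≠ 0) (hr : r ≠ 0)
    (hc : ∀ i, c i * d i = r * e i) (hαβ : ∑ i, α i * c i + β * r = 1) (t : ℂˣ) :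
    Nat.card {x : zpowEqSubgroup ℂˣ d e //
      x ∈ connectedComponent 1 ∧ (x : (ι → ℂˣ) × ℂˣ).2 = t} = r := by
  have hinj : Function.Injective (cocharacterInto (M := ℂˣ) hc) := fun u v huv => by
    rw [← character_cocharacter_eq_self hαβ u, ← character_cocharacter_eq_self hαβ v]
    exact congrArg (fun x : zpowEqSubgroup ℂˣ d e => character α β x.1) huv
  rw [connectedComponent_one_eq_range_cocharacterInto hd hr hc hαβ, Nat.card_mem_range_and hinj]
  simpa [cocharacterInto] using Complex.card_units_pow_eq hr t

end Complex

end Torus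

/-- **Formula (2.1).** Let `d₁, …, dₙ` be positive integers and `e₁, …, eₙ` integers,
and let `H = {(s₁, …, sₙ, t) ∈ (ℂˣ)ⁿ × ℂˣ : sᵢ^{dᵢ} = t^{eᵢ} for all i}` with the
subspace topology.  Set `r = lcmᵢ (dᵢ / gcd(dᵢ, eᵢ))`.  Then the homomorphism
`(s₁, …, sₙ, t) ↦ t` from the identity component `H⁰` of `H` to `ℂˣ` is surjective and
each of its fibers has exactly `r` elements. -/
theorem stmt_11 (n : ℕ) (d : Fin n → ℤ) (e : Fin n → ℤ)
    (hd : ∀ i, 1 ≤ d i) :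
    (∀ t : ℂˣ, ∃ x ∈ connectedComponent
        (⟨(fun _ => 1, 1), by simp⟩ :
          {p : (Fin n → ℂˣ) × ℂˣ // ∀ i, p.1 i ^ d i = p.2 ^ e i}),
      (x : (Fin n → ℂˣ) × ℂˣ).2 = t) ∧
    ∀ t : ℂˣ, Nat.card {x : {p : (Fin n → ℂˣ) × ℂˣ // ∀ i, p.1 i ^ d i = p.2 ^ e i} //
        x ∈ connectedComponent (⟨(fun _ => 1, 1), by simp⟩ :
          {p : (Fin n → ℂˣ) × ℂˣ // ∀ i, p.1 i ^ d i = p.2 ^ e i}) ∧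
        (x : (Fin n → ℂˣ) × ℂˣ).2 = t} =
      Finset.univ.lcm (fun i => (d i).toNat / Int.gcd (d i) (e i)) := by
  have hpos : ∀ i, 0 < d i := hd
  have hd0 : ∀ i, d i ≠ 0 := fun i => (hpos i).ne'
  have hr : lcmDivGcd d e ≠ 0 := lcmDivGcd_ne_zero hpos
  have hlcm := natCast_lcmDivGcd_dvd_iff (e := e) hpos
  choose c hc using (hlcm (lcmDivGcd d e)).1 dvd_rfl
  have hc' : ∀ i, c i * d i = lcmDivGcd d e * e i := fun i => by rw [hc i, mul_comm]
  obtain ⟨α, β, hαβ⟩ := exists_sum_mul_add_mul_eq_one (Int.natCast_ne_zero.2 hr) hlcm hc'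
  exact ⟨Torus.exists_mem_connectedComponent_one_snd_eq hd0 hr hc' hαβ,
    Torus.card_connectedComponent_one_snd_eq hd0 hr hc' hαβ⟩
end

section
/- Let R be a commutative noetherian ring, let A be an étale R-algebra (formally étale and of finite presentation over R), let M be an abelian group, and suppose A is graded by M as an R-algebra, i.e. A = ⊕_{m ∈ M} A_m as R-modules with A_m · A_{m'} ⊆ A_{m+m'} and with the image of R contained in A_0. If every homogeneous element of nonzero degree is nilpotent, then A_m = 0 for every m ≠ 0; that is, A is concentrated in degree 0. -/
/-!
Let `I` be the ideal generated by the homogeneous elements of nonzero degree. The projection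
onto degree zero is multiplicative modulo `I²` (for `a` of degree `i ≠ 0`, the degree-zero part
of `a * b` is `a` times the degree `-i` part of `b`), so it is an `R`-algebra map `A → A ⧸ I²`
which agrees with the quotient map modulo the square-zero ideal `I ⧸ I²`. Formal unramifiedness
forces the two maps to coincide, hence `I ⊆ I²`. A finitely generated idempotent ideal is
generated by an idempotent, which here is nilpotent, so `I = 0`.
-/

open DirectSum

theorem Ideal.eq_bot_of_isIdempotentElem_of_le_nilradical {R : Type*} [CommRing R] {I : Ideal R}
    (hfg : I.FG) (hidem : IsIdempotentElem I) (hnil : I ≤ nilradical R) : I = ⊥ := by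
  obtain ⟨e, he, rfl⟩ := (I.isIdempotentElem_iff_of_fg hfg).mp hidem
  have he0 : e = 0 := he.eq_zero_of_isNilpotent (hnil (Ideal.mem_span_singleton_self e))
  simp [he0]

namespace GradedRing

section GradedRing

variable {ι A σ : Type*} [CommRing A] [SetLike σ A] (𝒜 : ι → σ)

def nonzeroDegreeIdeal [Zero ι] : Ideal A :=
  Ideal.span {a | ∃ i ≠ 0, a ∈ 𝒜 i}

variable {𝒜}

theorem mem_nonzeroDegreeIdeal [Zero ι] {i : ι} (hi : i ≠ 0) {a : A} (ha : a ∈ 𝒜 i) :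
    a ∈ nonzeroDegreeIdeal 𝒜 :=
  Ideal.subset_span ⟨i, hi, ha⟩

theorem nonzeroDegreeIdeal_le_iff [Zero ι] {J : Ideal A} :
    nonzeroDegreeIdeal 𝒜 ≤ J ↔ ∀ i ≠ 0, ∀ a ∈ 𝒜 i, a ∈ J := by
  rw [nonzeroDegreeIdeal, Ideal.span_le]
  exact ⟨fun h i hi a ha => h ⟨i, hi, ha⟩, fun h a ⟨i, hi, ha⟩ => h i hi a ha⟩

variable [DecidableEq ι] [AddSubmonoidClass σ A]

theorem sub_proj_zero_mem_nonzeroDegreeIdeal [AddMonoid ι] [GradedRing 𝒜] (a : A) :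
    a - proj 𝒜 0 a ∈ nonzeroDegreeIdeal 𝒜 := by
  induction a using Decomposition.inductionOn 𝒜 with
  | zero => simp
  | @homogeneous i x =>
    obtain ⟨x, hx⟩ := x
    by_cases hi : i = 0
    · subst hi
      rw [proj_apply, decompose_of_mem_same 𝒜 hx, sub_self]
      exact zero_mem _
    · rw [proj_apply, decompose_of_mem_ne 𝒜 hx hi, sub_zero]
      exact mem_nonzeroDegreeIdeal hi hx
  | add a b ha hb =>
    rw [map_add, add_sub_add_comm]
    exact add_mem ha hb

theorem proj_zero_mul_sub_mem_nonzeroDegreeIdeal_sq [AddGroup ι] [GradedRing 𝒜] (a b : A) :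
    proj 𝒜 0 (a * b) - proj 𝒜 0 a * proj 𝒜 0 b ∈ nonzeroDegreeIdeal 𝒜 ^ 2 := by
  induction a using Decomposition.inductionOn 𝒜 with
  | zero => simp
  | @homogeneous i x =>
    obtain ⟨x, hx⟩ := x
    have hmul := coe_decompose_mul_add_of_left_mem 𝒜 (j := -i) (b := b) hx
    rw [add_neg_cancel] at hmul
    rw [proj_apply, proj_apply, proj_apply, hmul]
    by_cases hi : i = 0
    · subst hi
      rw [decompose_of_mem_same 𝒜 hx, neg_zero, sub_self]
      exact zero_mem _
    · rw [decompose_of_mem_ne 𝒜 hx hi, zero_mul, sub_zero, sq]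
      exact Ideal.mul_mem_mul (mem_nonzeroDegreeIdeal hi hx)
        (mem_nonzeroDegreeIdeal (neg_ne_zero.mpr hi) (decompose 𝒜 b (-i)).2)
  | add a a' ha ha' =>
    rw [add_mul, map_add, map_add, add_mul, add_sub_add_comm]
    exact add_mem ha ha'

variable (𝒜)

def projZeroModSq [AddGroup ι] [GradedRing 𝒜] : A →+* A ⧸ nonzeroDegreeIdeal 𝒜 ^ 2 where
  toFun a := Ideal.Quotient.mk _ (proj 𝒜 0 a)
  map_one' := by rw [proj_apply, decompose_of_mem_same 𝒜 SetLike.GradedOne.one_mem, map_one]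
  map_mul' a b := by
    rw [← map_mul, Ideal.Quotient.mk_eq_mk_iff_sub_mem]
    exact proj_zero_mul_sub_mem_nonzeroDegreeIdeal_sq a b
  map_zero' := by rw [map_zero, map_zero]
  map_add' a b := by rw [map_add, map_add]

theorem projZeroModSq_apply [AddGroup ι] [GradedRing 𝒜] (a : A) :
    projZeroModSq 𝒜 a = Ideal.Quotient.mk _ (proj 𝒜 0 a) :=
  rfl

end GradedRing

section GradedAlgebra

variable {ι R A : Type*} [DecidableEq ι] [AddGroup ι] [CommRing R] [CommRing A] [Algebra R A]
  (𝒜 : ι → Submodule R A) [GradedAlgebra 𝒜]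

def projZeroModSqₐ : A →ₐ[R] A ⧸ nonzeroDegreeIdeal 𝒜 ^ 2 :=
  { projZeroModSq 𝒜 with
    commutes' r := by
      change projZeroModSq 𝒜 _ = _
      rw [projZeroModSq_apply, proj_apply, decompose_of_mem_same 𝒜 (SetLike.algebraMap_mem_graded 𝒜 r)]
      rfl }

theorem projZeroModSqₐ_apply (a : A) : projZeroModSqₐ 𝒜 a = Ideal.Quotient.mk _ (proj 𝒜 0 a) := rfl

theorem isIdempotentElem_nonzeroDegreeIdeal [Algebra.FormallyUnramified R A] :
    IsIdempotentElem (nonzeroDegreeIdeal 𝒜) := by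
  set I := nonzeroDegreeIdeal 𝒜
  have hsq : (I.map (Ideal.Quotient.mk (I ^ 2))) ^ 2 = ⊥ := by
    rw [← Ideal.map_pow, Ideal.map_quotient_self]
  have hproj : Ideal.Quotient.mkₐ R (I ^ 2) = projZeroModSqₐ 𝒜 := by
    refine Algebra.FormallyUnramified.comp_injective _ hsq (AlgHom.ext fun a => ?_)
    rw [AlgHom.comp_apply, AlgHom.comp_apply, Ideal.Quotient.mkₐ_eq_mk, Ideal.Quotient.mkₐ_eq_mk,
      Ideal.Quotient.mk_eq_mk_iff_sub_mem, projZeroModSqₐ_apply, ← map_sub]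
    exact Ideal.mem_map_of_mem _ (sub_proj_zero_mem_nonzeroDegreeIdeal a)
  refine le_antisymm Ideal.mul_le_right ?_
  rw [← sq, nonzeroDegreeIdeal_le_iff]
  intro i hi a ha
  have := AlgHom.congr_fun hproj a
  rwa [projZeroModSqₐ_apply, proj_apply, decompose_of_mem_ne 𝒜 ha hi, Ideal.Quotient.mkₐ_eq_mk,
    map_zero, Ideal.Quotient.eq_zero_iff_mem] at this

end GradedAlgebra

end GradedRing

open GradedRing in
/-- **Algebraic core of Proposition 4.4.** Let `R` be a commutative noetherian ring, `A`
an étale `R`-algebra, and `M` an abelian group.  Suppose `A` is `M`-graded as an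
`R`-algebra: `A = ⊕_{m ∈ M} A_m` as `R`-modules, with `A_m · A_{m'} ⊆ A_{m+m'}` and the
image of `R` contained in `A_0`.  If every homogeneous element of nonzero degree is
nilpotent, then `A_m = 0` for every `m ≠ 0`. -/
theorem stmt_15 {R A : Type u} [CommRing R] [IsNoetherianRing R] [CommRing A]
    [Algebra R A] [Algebra.Etale R A]
    {M : Type*} [AddCommGroup M] [DecidableEq M]
    (𝒜 : M → Submodule R A) (hdec : DirectSum.IsInternal 𝒜)
    (hmul : ∀ m m' : M, ∀ a ∈ 𝒜 m, ∀ b ∈ 𝒜 m', a * b ∈ 𝒜 (m + m'))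
    (hR : ∀ r : R, algebraMap R A r ∈ 𝒜 0)
    (hnil : ∀ m : M, m ≠ 0 → ∀ a ∈ 𝒜 m, IsNilpotent a) :
    ∀ m : M, m ≠ 0 → 𝒜 m = ⊥ := by
  let _ : GradedAlgebra 𝒜 :=
    { hdec.chooseDecomposition with
      one_mem := by simpa using hR 1
      mul_mem := fun i j a b ha hb => hmul i j a ha b hb }
  have : IsNoetherianRing A := Algebra.FiniteType.isNoetherianRing R A
  have hI : nonzeroDegreeIdeal 𝒜 = ⊥ :=
    Ideal.eq_bot_of_isIdempotentElem_of_le_nilradical (IsNoetherian.noetherian _)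
      (isIdempotentElem_nonzeroDegreeIdeal 𝒜) (nonzeroDegreeIdeal_le_iff.mpr hnil)
  intro m hm
  exact eq_bot_iff.mpr fun a ha => by simpa [hI] using mem_nonzeroDegreeIdeal hm ha
end
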